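/- Let m be the minimum value of Γ(t+1) over t ≥ 0 (m ≈ 0.8856). For every integer n ≥ 3 and all real x > 0, y > 0 with y(n-1)² ≥ 2x, one has (2x/(y(n-1)²)) · ( r̃(x,y,n) − x^n ) ≤ ρ(x,y,n) ≤ (y(n-1)²/(2x)) · ( r̃(x,y,n) + ((1−m)/m)·x^n ). -/

import Mathlib

/-! Put `u = y(n-1)²/(2x)`, so that `u ≥ 1`, `r̃(x,y,n) = xⁿ eₙ(u)` with `eₙ(u) = Σ_{j<n} u^j/j!`,
and `ρ(x,y,n) = xⁿ E(u,n-1)`. Split `E(u,n-1)` into the integrals over `[k,k+1]`. There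
`u^k ≤ u^t ≤ u^(k+1)` and, by convexity and monotonicity of `Γ`, `k! ≤ Γ(t+1) ≤ (k+1)!`, the
lower bound failing only for `k = 0`, where `m ≤ Γ(t+1)` replaces it. Summing the pieces gives
`eₙ(u) - 1 ≤ u E(u,n-1) ≤ u (eₙ₋₁(u) + (1-m)/m)`. -/

/-- The continuous-analogue Pochhammer symbol
`r̃(x,y,n) = Σ_{k=1}^{n} ((n-1)^{2(n-k)} / (2^{n-k} (n-k)!)) x^k y^{n-k}`,
with `r̃(x,y,0) = 1`. -/
noncomputable def rtilde (x y : ℝ) (n : ℕ) : ℝ :=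
  if n = 0 then 1 else
    ∑ k ∈ Finset.Icc 1 n,
      ((n : ℝ) - 1) ^ (2 * (n - k)) / (2 ^ (n - k) * (Nat.factorial (n - k) : ℝ))
        * x ^ k * y ^ (n - k)

/-- `E(x,z) = ∫_0^z x^t / Γ(t+1) dt` (with `x^t` the real power). -/
noncomputable def Efun (x z : ℝ) : ℝ :=
  ∫ t in (0 : ℝ)..z, x ^ t / Real.Gamma (t + 1)

/-- The second continuous analogue of the Pochhammer symbol:
`ρ(x,y,z) = x^z · E(y(z-1)²/(2x), z-1)`. -/
noncomputable def rho (x y z : ℝ) : ℝ :=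
  x ^ z * Efun (y * (z - 1) ^ 2 / (2 * x)) (z - 1)

open Real Set Finset intervalIntegral
open scoped Nat

lemma continuousOn_rpow_div_Gamma_add_one {u : ℝ} (hu : 0 < u) :
    ContinuousOn (fun t : ℝ => u ^ t / Gamma (t + 1)) (Ioi (-1)) := by
  have hΓ : ContinuousOn (fun t : ℝ => Gamma (t + 1)) (Ioi (-1)) :=
    differentiableOn_Gamma_Ioi.continuousOn.comp (continuousOn_id.add continuousOn_const)
      fun t (ht : -1 < t) => show 0 < t + 1 by linarith
  exact ContinuousOn.div (fun t _ => (continuousAt_const_rpow hu.ne').continuousWithinAt) hΓ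
    fun t (ht : -1 < t) => (Gamma_pos_of_pos (by linarith)).ne'

lemma intervalIntegrable_rpow_div_Gamma_add_one {u a b : ℝ} (hu : 0 < u) (ha : -1 < a)
    (hb : -1 < b) :
    IntervalIntegrable (fun t : ℝ => u ^ t / Gamma (t + 1)) MeasureTheory.volume a b :=
  ((continuousOn_rpow_div_Gamma_add_one hu).mono
    fun _ ht => (lt_min ha hb).trans_le ht.1).intervalIntegrable

lemma Gamma_add_one_le_factorial_succ {j : ℕ} {t : ℝ} (hjt : (j : ℝ) ≤ t) (htj : t ≤ j + 1) :
    Gamma (t + 1) ≤ (j + 1)! := by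
  have hseg : t + 1 ∈ segment ℝ ((j : ℝ) + 1) ((j + 1 : ℕ) + 1) := by
    rw [segment_eq_Icc (by push_cast; linarith)]
    constructor <;> push_cast <;> linarith
  have hconv := convexOn_Gamma.le_on_segment (mem_Ioi.2 (by positivity))
    (mem_Ioi.2 (by positivity)) hseg
  rw [Gamma_nat_eq_factorial, Gamma_nat_eq_factorial] at hconv
  exact hconv.trans (max_le (by exact_mod_cast Nat.factorial_le j.le_succ) le_rfl)

lemma factorial_le_Gamma_add_one {j : ℕ} (hj : 1 ≤ j) {t : ℝ} (hjt : (j : ℝ) ≤ t) :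
    (j ! : ℝ) ≤ Gamma (t + 1) := by
  have hj' : (1 : ℝ) ≤ j := by exact_mod_cast hj
  rw [← Gamma_nat_eq_factorial]
  exact Gamma_strictMonoOn_Ici.monotoneOn (by simp; linarith) (by simp; linarith)
    (by linarith)

lemma pow_div_factorial_succ_le_rpow_div_Gamma_add_one {u : ℝ} (hu : 1 ≤ u) {k : ℕ} {t : ℝ}
    (ht : t ∈ Icc (k : ℝ) (k + 1)) : u ^ k / (k + 1)! ≤ u ^ t / Gamma (t + 1) := by
  rw [← rpow_natCast]
  exact div_le_div₀ (by positivity) (rpow_le_rpow_of_exponent_le hu ht.1)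
    (Gamma_pos_of_pos (by linarith [ht.1, k.cast_nonneg (α := ℝ)]))
    (Gamma_add_one_le_factorial_succ ht.1 ht.2)

lemma rpow_div_Gamma_add_one_le_pow_succ_div_factorial {u : ℝ} (hu : 1 ≤ u) {k : ℕ} (hk : 1 ≤ k)
    {t : ℝ} (ht : t ∈ Icc (k : ℝ) (k + 1)) : u ^ t / Gamma (t + 1) ≤ u ^ (k + 1) / k ! := by
  rw [← rpow_natCast, Nat.cast_succ]
  exact div_le_div₀ (by positivity) (rpow_le_rpow_of_exponent_le hu ht.2)
    (by positivity) (factorial_le_Gamma_add_one hk ht.1)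

lemma le_integral_add_one_of_forall_le {f : ℝ → ℝ} {a c : ℝ}
    (hf : IntervalIntegrable f MeasureTheory.volume a (a + 1)) (h : ∀ t ∈ Icc a (a + 1), c ≤ f t) :
    c ≤ ∫ t in a..a + 1, f t := by
  simpa using integral_mono_on (by linarith) intervalIntegrable_const hf h

lemma integral_add_one_le_of_forall_le {f : ℝ → ℝ} {a c : ℝ}
    (hf : IntervalIntegrable f MeasureTheory.volume a (a + 1)) (h : ∀ t ∈ Icc a (a + 1), f t ≤ c) :
    ∫ t in a..a + 1, f t ≤ c := by
  simpa using integral_mono_on (by linarith) hf intervalIntegrable_const h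

lemma Efun_natCast_eq_sum {u : ℝ} (hu : 0 < u) (N : ℕ) :
    Efun u N = ∑ k ∈ range N, ∫ t in (k : ℝ)..k + 1, u ^ t / Gamma (t + 1) := by
  have hint : ∀ k < N, IntervalIntegrable (fun t => u ^ t / Gamma (t + 1))
      MeasureTheory.volume (k : ℝ) ((k + 1 : ℕ) : ℝ) := fun k _ =>
    intervalIntegrable_rpow_div_Gamma_add_one hu (by linarith [k.cast_nonneg (α := ℝ)])
      (by linarith [(k + 1).cast_nonneg (α := ℝ)])
  simpa [Efun] using (sum_integral_adjacent_intervals hint).symm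

noncomputable def expPartialSum (u : ℝ) (n : ℕ) : ℝ := ∑ j ∈ range n, u ^ j / j !

lemma expPartialSum_succ (u : ℝ) (N : ℕ) :
    expPartialSum u (N + 1) = u * ∑ k ∈ range N, u ^ k / (k + 1)! + 1 := by
  rw [expPartialSum, sum_range_succ', mul_sum]
  simp only [pow_zero, Nat.factorial_zero, Nat.cast_one, div_one, pow_succ]
  congr 1
  exact sum_congr rfl fun k _ => by ring

lemma expPartialSum_mono {u : ℝ} (hu : 0 ≤ u) : Monotone (expPartialSum u) :=
  fun _ _ hmn => sum_le_sum_of_subset_of_nonneg (range_subset_range.2 hmn)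
    fun _ _ _ => by positivity

lemma expPartialSum_sub_one_le_mul_Efun {u : ℝ} (hu : 1 ≤ u) (N : ℕ) :
    expPartialSum u (N + 1) - 1 ≤ u * Efun u N := by
  have hu0 : 0 < u := by linarith
  rw [expPartialSum_succ, add_sub_cancel_right, Efun_natCast_eq_sum hu0]
  gcongr with k
  have hk : (0 : ℝ) ≤ k := k.cast_nonneg
  exact le_integral_add_one_of_forall_le
    (intervalIntegrable_rpow_div_Gamma_add_one hu0 (by linarith) (by linarith))
    fun t ht => pow_div_factorial_succ_le_rpow_div_Gamma_add_one hu ht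

lemma Efun_natCast_succ_le {u m : ℝ} (hu : 1 ≤ u) (hm : 0 < m)
    (hΓ : ∀ t ∈ Icc (0 : ℝ) 1, m ≤ Gamma (t + 1)) (N : ℕ) :
    Efun u (N + 1 : ℕ) ≤ u * (expPartialSum u (N + 1) + (1 - m) / m) := by
  have hu0 : 0 < u := by linarith
  have hfirst : ∫ t in (0 : ℝ)..0 + 1, u ^ t / Gamma (t + 1) ≤ u / m :=
    integral_add_one_le_of_forall_le
      (intervalIntegrable_rpow_div_Gamma_add_one hu0 (by norm_num) (by norm_num))
      fun t ht => div_le_div₀ hu0.le (by simpa using rpow_le_rpow_of_exponent_le hu ht.2) hm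
        (hΓ t (by simpa using ht))
  have hrest : ∀ k ∈ range N, ∫ t in ((k + 1 : ℕ) : ℝ)..(k + 1 : ℕ) + 1, u ^ t / Gamma (t + 1)
      ≤ u * (u ^ (k + 1) / (k + 1)!) := fun k _ => by
    have hk : (0 : ℝ) ≤ (k + 1 : ℕ) := Nat.cast_nonneg _
    exact integral_add_one_le_of_forall_le
      (intervalIntegrable_rpow_div_Gamma_add_one hu0 (by linarith) (by linarith))
      (fun t ht => rpow_div_Gamma_add_one_le_pow_succ_div_factorial hu (by omega) ht)
      |>.trans_eq (by ring)
  calc Efun u (N + 1 : ℕ)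
      = (∑ k ∈ range N, ∫ t in ((k + 1 : ℕ) : ℝ)..(k + 1 : ℕ) + 1, u ^ t / Gamma (t + 1))
        + ∫ t in (0 : ℝ)..0 + 1, u ^ t / Gamma (t + 1) := by
        rw [Efun_natCast_eq_sum hu0, sum_range_succ', Nat.cast_zero]
    _ ≤ (∑ k ∈ range N, u * (u ^ (k + 1) / (k + 1)!)) + u / m :=
        add_le_add (sum_le_sum hrest) hfirst
    _ = u * (expPartialSum u (N + 1) + (1 - m) / m) := by
        rw [expPartialSum, sum_range_succ', ← mul_sum]
        field_simp
        ring

lemma rtilde_eq_mul_expPartialSum {n : ℕ} (hn : n ≠ 0) {x : ℝ} (hx : x ≠ 0) (y : ℝ) :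
    rtilde x y n = x ^ n * expPartialSum (y * ((n : ℝ) - 1) ^ 2 / (2 * x)) n := by
  rw [rtilde, if_neg hn, expPartialSum, mul_sum]
  refine sum_nbij' (fun k => n - k) (fun j => n - j) ?_ ?_ ?_ ?_ ?_ <;>
    intro k hk <;> simp only [Finset.mem_Icc, Finset.mem_range] at hk ⊢
  · omega
  · omega
  · omega
  · omega
  · rw [show x ^ n = x ^ k * x ^ (n - k) by rw [← pow_add, Nat.add_sub_cancel' hk.2],
      div_pow, mul_pow, mul_pow, pow_mul]
    field_simp

theorem rho_between (m : ℝ)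
    (hm : IsLeast ((fun t : ℝ => Real.Gamma (t + 1)) '' Set.Ici (0 : ℝ)) m)
    (n : ℕ) (hn : 3 ≤ n) (x y : ℝ) (hx : 0 < x)
    (h : y * ((n : ℝ) - 1) ^ 2 ≥ 2 * x) :
    (2 * x / (y * ((n : ℝ) - 1) ^ 2)) * (rtilde x y n - x ^ n) ≤ rho x y (n : ℝ) ∧
    rho x y (n : ℝ) ≤
      (y * ((n : ℝ) - 1) ^ 2 / (2 * x)) * (rtilde x y n + ((1 - m) / m) * x ^ n) := by
  obtain ⟨⟨t₀, ht₀, hmt₀⟩, hmin⟩ := hm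
  have hm0 : 0 < m := hmt₀ ▸ Gamma_pos_of_pos (by linarith [mem_Ici.1 ht₀])
  have hΓ : ∀ t ∈ Icc (0 : ℝ) 1, m ≤ Gamma (t + 1) := fun t ht => hmin ⟨t, ht.1, rfl⟩
  obtain ⟨N, rfl⟩ : ∃ N, n = N + 2 := ⟨n - 2, by omega⟩
  set u := y * (((N + 2 : ℕ) : ℝ) - 1) ^ 2 / (2 * x) with hu_def
  have hu : 1 ≤ u := (one_le_div (by positivity)).2 h
  have hrt : rtilde x y (N + 2) = x ^ (N + 2) * expPartialSum u (N + 2) :=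
    rtilde_eq_mul_expPartialSum (by omega) hx.ne' y
  have hrho : rho x y (N + 2 : ℕ) = x ^ (N + 2) * Efun u (N + 1 : ℕ) := by
    rw [rho, rpow_natCast, ← hu_def]
    congr 2
    push_cast
    ring
  rw [← inv_div, ← hu_def, hrt, hrho]
  constructor
  · calc u⁻¹ * (x ^ (N + 2) * expPartialSum u (N + 2) - x ^ (N + 2))
        = u⁻¹ * (x ^ (N + 2) * (expPartialSum u (N + 1 + 1) - 1)) := by ring
      _ ≤ u⁻¹ * (x ^ (N + 2) * (u * Efun u (N + 1 : ℕ))) := by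
        gcongr
        exact expPartialSum_sub_one_le_mul_Efun hu (N + 1)
      _ = x ^ (N + 2) * Efun u (N + 1 : ℕ) := by field_simp
  · calc x ^ (N + 2) * Efun u (N + 1 : ℕ)
        ≤ x ^ (N + 2) * (u * (expPartialSum u (N + 2) + (1 - m) / m)) := by
          gcongr
          refine (Efun_natCast_succ_le hu hm0 hΓ N).trans ?_
          gcongr
          exact expPartialSum_mono (by linarith) (by omega)
      _ = u * (x ^ (N + 2) * expPartialSum u (N + 2)
            + (1 - m) / m * x ^ (N + 2)) := by ring
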